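/- Fix 0 < v_low ≤ v̄ and an integer n ≥ 1. The supremum, over all n-level pricing mechanisms (prices 0 ≤ v₁ ≤ ⋯ ≤ vₙ ≤ v̄ with probabilities x₁,…,xₙ), of the competitive ratio over the support ambiguity set 𝓕_supp equals 𝓡ₙ = ( n·(v̄/v_low)^{1/n} − (n−1) )^{-1}. It is attained by the geometric price levels vᵢ = v_low^{(n+1−i)/n}·v̄^{(i−1)/n} for i = 1,…,n, with probabilities x₁ = (v̄/v_low)^{1/n}·𝓡ₙ and xᵢ = ((v̄/v_low)^{1/n} − 1)·𝓡ₙ for i = 2,…,n. -/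

import Mathlib

open MeasureTheory Set

noncomputable section

/-- Hindsight optimal revenue: `OPT(F) = sup_{p ∈ [0, v̄]} p · F([p, v̄])`. -/
def hindsightOpt (vbar : ℝ) (F : Measure ℝ) : ℝ :=
  ⨆ p : Icc (0 : ℝ) vbar, (p : ℝ) * (F (Icc (p : ℝ) vbar)).toReal

/-- The support ambiguity set: probability measures on `[0, v̄]` giving full mass to
`[v_low, v̄]`. -/
def Fsupp (vlow vbar : ℝ) : Set (Measure ℝ) :=
  {F | IsProbabilityMeasure F ∧ F (Icc (0 : ℝ) vbar) = 1 ∧ F (Icc vlow vbar) = 1}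

/-- Expected revenue of the `n`-level mechanism posting price `v i` with probability `x i`. -/
def mechRev (vbar : ℝ) (n : ℕ) (v x : ℕ → ℝ) (F : Measure ℝ) : ℝ :=
  ∑ i ∈ Finset.Icc 1 n, v i * x i * (F (Icc (v i) vbar)).toReal

/-- Competitive ratio of the `n`-level mechanism over the support ambiguity set. -/
def suppCR (vlow vbar : ℝ) (n : ℕ) (v x : ℕ → ℝ) : ℝ :=
  ⨅ F : ↥(Fsupp vlow vbar), mechRev vbar n v x F.1 / hindsightOpt vbar F.1

/-!
Testing a mechanism against the point masses `δ_p`, `p ∈ [v_low, v̄]`, shows that a competitive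
ratio `c` forces `c · p ≤ ∑_{vᵢ ≤ p} vᵢ xᵢ`. After raising all prices to at least `v_low` and
appending `v_{n+1} = v̄`, a valuation just below a price jump `v_j < v_{j+1}` gives
`c · v_{j+1} ≤ S_j := ∑_{i ≤ j} vᵢ xᵢ`, and summation by parts turns `∑ xᵢ = 1` into
`1 ≥ c (∑_j v_{j+1} / v_j - (n - 1))`. The ratios multiply to `v̄ / v_low`, so AM-GM gives
`c ≤ 𝓡ₙ`. Conversely, the geometric mechanism has `S_k = 𝓡ₙ · v_{k+1}`, so for `p ∈ [v_k, v_{k+1}]`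
and any `F`, `𝓡ₙ · p · F[p, v̄] ≤ S_k · F[p, v̄] ≤ Rev(F)`; the point mass at `v̄` shows that its
ratio is not larger than `𝓡ₙ`.
-/

section PointMass

variable {vlow vbar : ℝ}

lemma dirac_Icc_toReal {a p : ℝ} (hp : p ≤ vbar) :
    (Measure.dirac p (Icc a vbar)).toReal = if a ≤ p then 1 else 0 := by
  by_cases ha : a ≤ p <;> simp [Measure.dirac_apply' _ measurableSet_Icc, indicator, ha, hp]

lemma dirac_mem_Fsupp (hlow : 0 ≤ vlow) {p : ℝ} (hp : p ∈ Icc vlow vbar) :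
    Measure.dirac p ∈ Fsupp vlow vbar :=
  ⟨inferInstance, by simp [Measure.dirac_apply' _ measurableSet_Icc, hp.2, hlow.trans hp.1],
    by simp [Measure.dirac_apply' _ measurableSet_Icc, hp]⟩

lemma toReal_measure_Icc_eq_one {F : Measure ℝ} (hF : F ∈ Fsupp vlow vbar) {a : ℝ}
    (ha : a ≤ vlow) : (F (Icc a vbar)).toReal = 1 := by
  have := hF.1
  rw [le_antisymm prob_le_one (hF.2.2 ▸ measure_mono (Icc_subset_Icc_left ha)),
    ENNReal.toReal_one]

lemma mul_toReal_measure_Icc_le_max {F : Measure ℝ} (hF : F ∈ Fsupp vlow vbar) {p : ℝ}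
    (hp : 0 ≤ p) : p * (F (Icc p vbar)).toReal ≤
      max p vlow * (F (Icc (max p vlow) vbar)).toReal := by
  rcases le_total p vlow with h | h
  · have := hF.1
    rw [max_eq_right h, toReal_measure_Icc_eq_one hF le_rfl, mul_one]
    exact (mul_le_of_le_one_right hp measureReal_le_one).trans h
  · rw [max_eq_left h]

lemma le_hindsightOpt {F : Measure ℝ} [IsProbabilityMeasure F] {p : ℝ} (hp : p ∈ Icc 0 vbar) :
    p * (F (Icc p vbar)).toReal ≤ hindsightOpt vbar F := by
  refine le_ciSup (f := fun q : Icc (0 : ℝ) vbar => (q : ℝ) * (F (Icc (q : ℝ) vbar)).toReal)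
    ⟨vbar, ?_⟩ ⟨p, hp⟩
  rintro _ ⟨q, rfl⟩
  exact (mul_le_of_le_one_right q.2.1 measureReal_le_one).trans q.2.2

lemma hindsightOpt_le (hbar : 0 ≤ vbar) {F : Measure ℝ} {c : ℝ}
    (h : ∀ p ∈ Icc 0 vbar, p * (F (Icc p vbar)).toReal ≤ c) : hindsightOpt vbar F ≤ c :=
  have : Nonempty (Icc (0 : ℝ) vbar) := ⟨⟨0, le_rfl, hbar⟩⟩
  ciSup_le fun p => h p p.2

lemma hindsightOpt_dirac {p : ℝ} (hp : p ∈ Icc 0 vbar) :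
    hindsightOpt vbar (Measure.dirac p) = p := by
  refine le_antisymm (hindsightOpt_le (hp.1.trans hp.2) fun q hq => ?_) ?_
  · rw [dirac_Icc_toReal hp.2]
    split_ifs with h <;> simp [h, hp.1]
  · have h := le_hindsightOpt (F := Measure.dirac p) hp
    rwa [dirac_Icc_toReal hp.2, if_pos le_rfl, mul_one] at h

lemma hindsightOpt_pos (hlow : 0 < vlow) (hbar : vlow ≤ vbar) {F : Measure ℝ}
    (hF : F ∈ Fsupp vlow vbar) : 0 < hindsightOpt vbar F := by
  have := hF.1
  have h := le_hindsightOpt (F := F) ⟨hlow.le, hbar⟩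
  rw [toReal_measure_Icc_eq_one hF le_rfl, mul_one] at h
  exact hlow.trans_le h

end PointMass

def mechRevAt (n : ℕ) (v x : ℕ → ℝ) (p : ℝ) : ℝ :=
  ∑ i ∈ Finset.Icc 1 n, if v i ≤ p then v i * x i else 0

section Mechanism

variable {vlow vbar : ℝ} {n : ℕ} {v x : ℕ → ℝ}

lemma mechRev_dirac {p : ℝ} (hp : p ≤ vbar) :
    mechRev vbar n v x (Measure.dirac p) = mechRevAt n v x p := by
  refine Finset.sum_congr rfl fun i _ => ?_
  rw [dirac_Icc_toReal hp]
  split_ifs <;> simp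

lemma mechRevAt_of_forall_le {p : ℝ} (h : ∀ i ∈ Finset.Icc 1 n, v i ≤ p) :
    mechRevAt n v x p = ∑ i ∈ Finset.Icc 1 n, v i * x i :=
  Finset.sum_congr rfl fun i hi => if_pos (h i hi)

lemma bddBelow_range_ratio (hlow : 0 < vlow) (hbar : vlow ≤ vbar)
    (hv : ∀ i ∈ Finset.Icc 1 n, 0 ≤ v i) (hx : ∀ i ∈ Finset.Icc 1 n, 0 ≤ x i) :
    BddBelow (range fun F : Fsupp vlow vbar => mechRev vbar n v x F.1 / hindsightOpt vbar F.1) := by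
  refine ⟨0, ?_⟩
  rintro _ ⟨F, rfl⟩
  exact div_nonneg (Finset.sum_nonneg fun i hi => by have := hv i hi; have := hx i hi; positivity)
    (hindsightOpt_pos hlow hbar F.2).le

lemma suppCR_mul_le_mechRevAt (hlow : 0 < vlow) (hbar : vlow ≤ vbar)
    (hv : ∀ i ∈ Finset.Icc 1 n, 0 ≤ v i) (hx : ∀ i ∈ Finset.Icc 1 n, 0 ≤ x i)
    {p : ℝ} (hp : p ∈ Icc vlow vbar) : suppCR vlow vbar n v x * p ≤ mechRevAt n v x p := by
  have hp0 : 0 < p := hlow.trans_le hp.1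
  have h := ciInf_le (bddBelow_range_ratio hlow hbar hv hx) ⟨_, dirac_mem_Fsupp hlow.le hp⟩
  rwa [mechRev_dirac hp.2, hindsightOpt_dirac ⟨hp0.le, hp.2⟩, le_div_iff₀ hp0] at h

lemma le_suppCR (hlow : 0 < vlow) (hbar : vlow ≤ vbar) {c : ℝ}
    (h : ∀ F ∈ Fsupp vlow vbar, c * hindsightOpt vbar F ≤ mechRev vbar n v x F) :
    c ≤ suppCR vlow vbar n v x :=
  have : Nonempty (Fsupp vlow vbar) := ⟨⟨_, dirac_mem_Fsupp hlow.le ⟨le_rfl, hbar⟩⟩⟩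
  le_ciInf fun F => (le_div_iff₀ (hindsightOpt_pos hlow hbar F.2)).mpr (h F.1 F.2)

end Mechanism

section OptimalRatio

def geomRatio (vlow vbar : ℝ) (n : ℕ) : ℝ := (vbar / vlow) ^ ((1 : ℝ) / n)

def optRatio (vlow vbar : ℝ) (n : ℕ) : ℝ := ((n : ℝ) * geomRatio vlow vbar n - ((n : ℝ) - 1))⁻¹

variable {vlow vbar : ℝ} {n : ℕ}

lemma one_le_geomRatio (hlow : 0 < vlow) (hbar : vlow ≤ vbar) : 1 ≤ geomRatio vlow vbar n :=
  Real.one_le_rpow ((one_le_div hlow).mpr hbar) (by positivity)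

lemma one_le_nat_mul_geomRatio_sub (hlow : 0 < vlow) (hbar : vlow ≤ vbar) (hn : 1 ≤ n) :
    1 ≤ (n : ℝ) * geomRatio vlow vbar n - (n - 1) := by
  have := one_le_geomRatio hlow hbar (n := n)
  have : (1 : ℝ) ≤ n := by exact_mod_cast hn
  nlinarith

lemma optRatio_pos (hlow : 0 < vlow) (hbar : vlow ≤ vbar) (hn : 1 ≤ n) :
    0 < optRatio vlow vbar n :=
  inv_pos.mpr (one_pos.trans_le (one_le_nat_mul_geomRatio_sub hlow hbar hn))

end OptimalRatio

section Sequences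

variable {n : ℕ} {u y : ℕ → ℝ}

lemma prod_Icc_div_eq (hu : ∀ j ∈ Finset.Icc 1 (n + 1), u j ≠ 0) :
    ∏ j ∈ Finset.Icc 1 n, u (j + 1) / u j = u (n + 1) / u 1 := by
  induction n with
  | zero => simp [div_self (hu 1 (by simp))]
  | succ k ih =>
    rw [Finset.prod_Icc_succ_top (by omega),
      ih fun j hj => hu j (Finset.Icc_subset_Icc_right (by omega) hj)]
    field_simp [hu (k + 1) (by simp)]

lemma sum_eq_sum_mul_inv_sub_inv_add (hu : ∀ j ∈ Finset.Icc 1 n, u j ≠ 0) :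
    ∑ i ∈ Finset.Icc 1 n, y i =
      ∑ j ∈ Finset.Icc 1 n, (∑ i ∈ Finset.Icc 1 j, u i * y i) * ((u j)⁻¹ - (u (j + 1))⁻¹) +
        (∑ i ∈ Finset.Icc 1 n, u i * y i) / u (n + 1) := by
  induction n with
  | zero => simp
  | succ k ih =>
    have hk : u (k + 1) ≠ 0 := hu _ (by simp)
    rw [Finset.sum_Icc_succ_top (by omega), Finset.sum_Icc_succ_top (by omega),
      Finset.sum_Icc_succ_top (by omega),
      ih fun j hj => hu j (Finset.Icc_subset_Icc_right k.le_succ hj)]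
    field_simp
    ring

lemma nat_mul_rpow_le_sum_div (hn : 1 ≤ n) (hu : ∀ j ∈ Finset.Icc 1 (n + 1), 0 < u j) :
    n * (u (n + 1) / u 1) ^ (1 / n : ℝ) ≤ ∑ j ∈ Finset.Icc 1 n, u (j + 1) / u j := by
  have hn' : (0 : ℝ) < n := by exact_mod_cast hn
  have h := Real.geom_mean_le_arith_mean (Finset.Icc 1 n) (fun _ => 1) (fun j => u (j + 1) / u j)
    (fun _ _ => zero_le_one) (by simpa using hn')
    (fun j hj => by
      have := hu j (Finset.Icc_subset_Icc_right n.le_succ hj)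
      have := hu (j + 1) (by simp at hj ⊢; omega)
      positivity)
  simp only [Real.rpow_one, one_mul, Finset.sum_const, Nat.card_Icc, Nat.add_sub_cancel,
    nsmul_eq_mul, mul_one, prod_Icc_div_eq fun j hj => (hu j hj).ne'] at h
  rw [one_div, mul_comm, ← le_div_iff₀ hn']
  exact h

end Sequences

section RatioBound

variable {n : ℕ} {u y : ℕ → ℝ} {c : ℝ}

lemma mul_le_sum_of_lt (hu : MonotoneOn u (Set.Icc 1 (n + 1))) (hu1 : 0 ≤ u 1)
    (hy : ∀ i ∈ Finset.Icc 1 n, 0 ≤ y i) (hc : 0 < c)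
    (hrev : ∀ p ∈ Icc (u 1) (u (n + 1)), c * p ≤ mechRevAt n u y p)
    {j : ℕ} (hj : j ∈ Finset.Icc 1 n) (hlt : u j < u (j + 1)) :
    c * u (j + 1) ≤ ∑ i ∈ Finset.Icc 1 j, u i * y i := by
  rw [Finset.mem_Icc] at hj
  by_contra! hS
  -- a valuation strictly between `u j` and `u (j + 1)` only buys at the first `j` prices
  obtain ⟨p, hp, hpj⟩ := exists_between (max_lt hlt ((div_lt_iff₀' hc).mpr hS))
  have hle : mechRevAt n u y p ≤ ∑ i ∈ Finset.Icc 1 j, u i * y i := by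
    rw [mechRevAt, ← Finset.sum_subset (Finset.Icc_subset_Icc_right hj.2) fun i hi hij => ?_]
    · refine Finset.sum_le_sum fun i hi => ?_
      rw [Finset.mem_Icc] at hi
      have := hu1.trans (hu ⟨le_rfl, by omega⟩ ⟨hi.1, by omega⟩ hi.1)
      have := hy i (Finset.mem_Icc.mpr ⟨hi.1, by omega⟩)
      split_ifs
      exacts [le_rfl, by positivity]
    · simp only [Finset.mem_Icc, not_and, not_le] at hi hij
      exact if_neg (hpj.trans_le (hu ⟨by omega, by omega⟩ ⟨hi.1, by omega⟩ (hij hi.1))).not_ge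
  have hmem : p ∈ Icc (u 1) (u (n + 1)) :=
    ⟨(hu ⟨le_rfl, by omega⟩ ⟨hj.1, by omega⟩ hj.1).trans ((le_max_left _ _).trans hp.le),
      hpj.le.trans (hu ⟨by omega, by omega⟩ ⟨by omega, le_rfl⟩ (by omega))⟩
  have := (div_lt_iff₀' hc).mp ((le_max_right _ _).trans_lt hp)
  linarith [hrev p hmem]

theorem mul_nat_mul_rpow_sub_le_one (hn : 1 ≤ n) (hu : MonotoneOn u (Set.Icc 1 (n + 1)))
    (hu1 : 0 < u 1) (hy : ∀ i ∈ Finset.Icc 1 n, 0 ≤ y i) (hy1 : ∑ i ∈ Finset.Icc 1 n, y i = 1)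
    (hc : 0 < c) (hrev : ∀ p ∈ Icc (u 1) (u (n + 1)), c * p ≤ mechRevAt n u y p) :
    c * (n * (u (n + 1) / u 1) ^ (1 / n : ℝ) - (n - 1)) ≤ 1 := by
  have hpos : ∀ j ∈ Finset.Icc 1 (n + 1), 0 < u j := fun j hj => by
    rw [Finset.mem_Icc] at hj
    exact hu1.trans_le (hu ⟨le_rfl, by omega⟩ hj hj.1)
  set S : ℕ → ℝ := fun k => ∑ i ∈ Finset.Icc 1 k, u i * y i
  have hgap : ∀ j ∈ Finset.Icc 1 n,
      c * (u (j + 1) / u j - 1) ≤ S j * ((u j)⁻¹ - (u (j + 1))⁻¹) := by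
    intro j hj
    have hj' := Finset.mem_Icc.mp hj
    have huj := hpos j (by simp; omega)
    have huj' := hpos (j + 1) (by simp; omega)
    rcases (hu ⟨hj'.1, by omega⟩ ⟨by omega, by omega⟩ j.le_succ).eq_or_lt with h | h
    · simp [← h, div_self huj.ne']
    · calc c * (u (j + 1) / u j - 1) = c * u (j + 1) * ((u j)⁻¹ - (u (j + 1))⁻¹) := by
            field_simp
        _ ≤ S j * ((u j)⁻¹ - (u (j + 1))⁻¹) :=
            mul_le_mul_of_nonneg_right (mul_le_sum_of_lt hu hu1.le hy hc hrev hj h)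
              (sub_nonneg.mpr (inv_anti₀ huj h.le))
  have htop : c ≤ S n / u (n + 1) := by
    rw [le_div_iff₀ (hpos _ (by simp))]
    have h := hrev (u (n + 1)) ⟨hu ⟨le_rfl, by omega⟩ ⟨by omega, le_rfl⟩ (by omega), le_rfl⟩
    rw [mechRevAt_of_forall_le fun i hi => ?_] at h
    · exact h
    rw [Finset.mem_Icc] at hi
    exact hu ⟨hi.1, by omega⟩ ⟨by omega, le_rfl⟩ (by omega)
  calc c * (n * (u (n + 1) / u 1) ^ (1 / n : ℝ) - (n - 1))
      ≤ c * (∑ j ∈ Finset.Icc 1 n, u (j + 1) / u j - (n - 1)) := by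
        gcongr
        exact nat_mul_rpow_le_sum_div hn hpos
    _ = ∑ j ∈ Finset.Icc 1 n, c * (u (j + 1) / u j - 1) + c := by
        simp [Finset.mul_sum, mul_sub, Finset.sum_sub_distrib]
        ring
    _ ≤ ∑ j ∈ Finset.Icc 1 n, S j * ((u j)⁻¹ - (u (j + 1))⁻¹) + S n / u (n + 1) :=
        add_le_add (Finset.sum_le_sum hgap) htop
    _ = 1 := by
        rw [← hy1, sum_eq_sum_mul_inv_sub_inv_add (y := y) fun j hj =>
          (hpos j (Finset.Icc_subset_Icc_right n.le_succ hj)).ne']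

end RatioBound

section UpperBound

variable {vlow vbar : ℝ} {n : ℕ} {v x : ℕ → ℝ}

lemma mechRevAt_le_of_eq_max {u : ℕ → ℝ} {a p : ℝ} (hx : ∀ i ∈ Finset.Icc 1 n, 0 ≤ x i)
    (hu : ∀ i ∈ Finset.Icc 1 n, u i = max (v i) a) (hp : a ≤ p) :
    mechRevAt n v x p ≤ mechRevAt n u x p := by
  refine Finset.sum_le_sum fun i hi => ?_
  rw [hu i hi]
  split_ifs with hv hmax hmax
  · exact mul_le_mul_of_nonneg_right (le_max_left _ _) (hx i hi)
  · exact absurd (max_le hv hp) hmax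
  · exact absurd ((le_max_left _ _).trans hmax) hv
  · exact le_rfl

lemma monotoneOn_ite_max {a b : ℝ} (hv : ∀ i, 1 ≤ i → i < n → v i ≤ v (i + 1))
    (hvn : v n ≤ b) (hab : a ≤ b) :
    MonotoneOn (fun i => if i ≤ n then max (v i) a else b) (Set.Icc 1 (n + 1)) := by
  refine monotoneOn_of_le_succ ordConnected_Icc fun i _ hi hi' => ?_
  simp only [Order.succ_eq_add_one, mem_Icc] at hi hi' ⊢
  rcases (show i ≤ n by omega).lt_or_eq with h | rfl
  · simp only [if_pos h.le, if_pos (show i + 1 ≤ n by omega)]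
    exact max_le_max (hv i hi.1 h) le_rfl
  · simp only [if_pos le_rfl, if_neg (show ¬ i + 1 ≤ i by omega)]
    exact max_le hvn hab

theorem suppCR_le_optRatio (hlow : 0 < vlow) (hbar : vlow ≤ vbar) (hn : 1 ≤ n) (hv1 : 0 ≤ v 1)
    (hv : ∀ i, 1 ≤ i → i < n → v i ≤ v (i + 1)) (hvn : v n ≤ vbar)
    (hx : ∀ i ∈ Finset.Icc 1 n, 0 ≤ x i) (hx1 : ∑ i ∈ Finset.Icc 1 n, x i = 1) :
    suppCR vlow vbar n v x ≤ optRatio vlow vbar n := by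
  set c := suppCR vlow vbar n v x
  rcases le_or_gt c 0 with hc | hc
  · exact hc.trans (optRatio_pos hlow hbar hn).le
  have hmono : MonotoneOn v (Set.Icc 1 n) := monotoneOn_of_le_succ ordConnected_Icc
    fun i _ hi hi' => hv i hi.1 (by simp only [Order.succ_eq_add_one, mem_Icc] at hi'; omega)
  have hv1_le : ∀ i ∈ Finset.Icc 1 n, v 1 ≤ v i := fun i hi => by
    rw [Finset.mem_Icc] at hi
    exact hmono ⟨le_rfl, hn⟩ hi hi.1
  have hrev : ∀ p ∈ Icc vlow vbar, c * p ≤ mechRevAt n v x p := fun p hp =>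
    suppCR_mul_le_mechRevAt hlow hbar (fun i hi => hv1.trans (hv1_le i hi)) hx hp
  have hv1low : v 1 ≤ vlow := by
    by_contra! h
    have h0 : mechRevAt n v x vlow = 0 :=
      Finset.sum_eq_zero fun i hi => if_neg (h.trans_le (hv1_le i hi)).not_ge
    nlinarith [hrev vlow ⟨le_rfl, hbar⟩]
  -- raising prices to `vlow` loses no revenue on `Fsupp`; `u (n + 1) = vbar` closes the chain
  set u : ℕ → ℝ := fun i => if i ≤ n then max (v i) vlow else vbar
  have hu : MonotoneOn u (Set.Icc 1 (n + 1)) := monotoneOn_ite_max hv hvn hbar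
  have hu1 : u 1 = vlow := by simp [u, hn, hv1low]
  have hun : u (n + 1) = vbar := by simp [u]
  have key := mul_nat_mul_rpow_sub_le_one hn hu (hu1 ▸ hlow) hx hx1 hc fun p hp => by
    rw [hu1, hun] at hp
    exact (hrev p hp).trans (mechRevAt_le_of_eq_max hx
      (fun i hi => if_pos (Finset.mem_Icc.mp hi).2) hp.1)
  rw [hu1, hun] at key
  rw [optRatio, ← one_div]
  exact (le_div_iff₀ (one_pos.trans_le (one_le_nat_mul_geomRatio_sub hlow hbar hn))).mpr key

end UpperBound

lemma exists_mem_Icc_le_le_succ {α : Type*} [LinearOrder α] {f : ℕ → α} {q : α} {n : ℕ}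
    (hn : 1 ≤ n) (h1 : f 1 ≤ q) (hq : q ≤ f (n + 1)) :
    ∃ k ∈ Finset.Icc 1 n, f k ≤ q ∧ q ≤ f (k + 1) := by
  induction n, hn using Nat.le_induction with
  | base => exact ⟨1, by simp, h1, hq⟩
  | succ m hm ih =>
    by_cases h : q ≤ f (m + 1)
    · obtain ⟨k, hk, hk'⟩ := ih h
      exact ⟨k, Finset.Icc_subset_Icc_right m.le_succ hk, hk'⟩
    · exact ⟨m + 1, Finset.mem_Icc.mpr ⟨by omega, le_rfl⟩, (not_le.mp h).le, hq⟩

section LowerBound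

variable {vlow vbar : ℝ} {n : ℕ} {v x : ℕ → ℝ}

theorem mul_hindsightOpt_le_mechRev {R : ℝ} (hlow : 0 < vlow) (hR : 0 < R) (hn : 1 ≤ n)
    (hv : Monotone v) (hv1 : v 1 = vlow) (hvn : v (n + 1) = vbar)
    (hx : ∀ i ∈ Finset.Icc 1 n, 0 ≤ x i)
    (hpartial : ∀ k ∈ Finset.Icc 1 n, R * v (k + 1) ≤ ∑ i ∈ Finset.Icc 1 k, v i * x i)
    {F : Measure ℝ} (hF : F ∈ Fsupp vlow vbar) :
    R * hindsightOpt vbar F ≤ mechRev vbar n v x F := by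
  have := hF.1
  have hbar : vlow ≤ vbar := hv1 ▸ hvn ▸ hv (by omega)
  have hvx : ∀ i ∈ Finset.Icc 1 n, 0 ≤ v i * x i := fun i hi =>
    mul_nonneg (hlow.le.trans (hv1 ▸ hv (Finset.mem_Icc.mp hi).1)) (hx i hi)
  rw [← le_div_iff₀' hR]
  refine hindsightOpt_le (hlow.le.trans hbar) fun p hp => ?_
  rw [le_div_iff₀' hR]
  obtain ⟨k, hk, hvk, hqk⟩ : ∃ k ∈ Finset.Icc 1 n, v k ≤ max p vlow ∧ max p vlow ≤ v (k + 1) :=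
    exists_mem_Icc_le_le_succ hn (hv1.trans_le (le_max_right p vlow))
      (hvn ▸ max_le hp.2 hbar)
  have hkn := (Finset.mem_Icc.mp hk).2
  calc R * (p * (F (Icc p vbar)).toReal)
      ≤ R * v (k + 1) * (F (Icc (max p vlow) vbar)).toReal := by
        rw [mul_assoc]
        refine mul_le_mul_of_nonneg_left ((mul_toReal_measure_Icc_le_max hF hp.1).trans ?_) hR.le
        exact mul_le_mul_of_nonneg_right hqk ENNReal.toReal_nonneg
    _ ≤ (∑ i ∈ Finset.Icc 1 k, v i * x i) * (F (Icc (max p vlow) vbar)).toReal := by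
        exact mul_le_mul_of_nonneg_right (hpartial k hk) ENNReal.toReal_nonneg
    _ ≤ ∑ i ∈ Finset.Icc 1 k, v i * x i * (F (Icc (v i) vbar)).toReal := by
        rw [Finset.sum_mul]
        refine Finset.sum_le_sum fun i hi => ?_
        have hik := Finset.mem_Icc.mp hi
        exact mul_le_mul_of_nonneg_left (ENNReal.toReal_mono (measure_ne_top F _)
            (measure_mono (Icc_subset_Icc_left ((hv hik.2).trans hvk))))
          (hvx i (Finset.mem_Icc.mpr ⟨hik.1, hik.2.trans hkn⟩))
    _ ≤ mechRev vbar n v x F :=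
        Finset.sum_le_sum_of_subset_of_nonneg (Finset.Icc_subset_Icc_right hkn)
          fun i hi _ => mul_nonneg (hvx i hi) ENNReal.toReal_nonneg

end LowerBound

section GeometricMechanism

def geomPrice (vlow vbar : ℝ) (n i : ℕ) : ℝ :=
  vlow ^ (((n : ℝ) + 1 - (i : ℝ)) / n) * vbar ^ (((i : ℝ) - 1) / n)

def geomProb (vlow vbar : ℝ) (n i : ℕ) : ℝ :=
  if i = 1 then geomRatio vlow vbar n * optRatio vlow vbar n
  else (geomRatio vlow vbar n - 1) * optRatio vlow vbar n

variable {vlow vbar : ℝ} {n : ℕ}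

lemma geomPrice_one (hn : 1 ≤ n) : geomPrice vlow vbar n 1 = vlow := by
  have : (n : ℝ) ≠ 0 := by positivity
  simp [geomPrice, this]

lemma geomPrice_succ (hlow : 0 < vlow) (hbar : vlow ≤ vbar) (i : ℕ) :
    geomPrice vlow vbar n (i + 1) = geomRatio vlow vbar n * geomPrice vlow vbar n i := by
  have hbar0 := hlow.trans_le hbar
  simp only [geomPrice, geomRatio]
  rw [Real.div_rpow hbar0.le hlow.le]
  have e1 : ((n : ℝ) + 1 - ((i + 1 : ℕ) : ℝ)) / n = ((n : ℝ) + 1 - (i : ℝ)) / n - 1 / n := by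
    push_cast; ring
  have e2 : (((i + 1 : ℕ) : ℝ) - 1) / n = ((i : ℝ) - 1) / n + 1 / n := by push_cast; ring
  rw [e1, e2, Real.rpow_sub hlow, Real.rpow_add hbar0]
  field_simp

lemma geomPrice_top (hn : 1 ≤ n) : geomPrice vlow vbar n (n + 1) = vbar := by
  have : (n : ℝ) ≠ 0 := by positivity
  simp [geomPrice, this]

lemma geomPrice_pos (hlow : 0 < vlow) (hbar : vlow ≤ vbar) (i : ℕ) :
    0 < geomPrice vlow vbar n i := by
  have := hlow.trans_le hbar
  unfold geomPrice
  positivity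

lemma monotone_geomPrice (hlow : 0 < vlow) (hbar : vlow ≤ vbar) :
    Monotone (geomPrice vlow vbar n) :=
  monotone_nat_of_le_succ fun i => by
    rw [geomPrice_succ hlow hbar]
    exact le_mul_of_one_le_left (geomPrice_pos hlow hbar i).le (one_le_geomRatio hlow hbar)

lemma geomProb_nonneg (hlow : 0 < vlow) (hbar : vlow ≤ vbar) (hn : 1 ≤ n) (i : ℕ) :
    0 ≤ geomProb vlow vbar n i := by
  have := one_le_geomRatio hlow hbar (n := n)
  have := optRatio_pos hlow hbar hn
  unfold geomProb
  split_ifs <;> nlinarith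

lemma sum_geomProb (hlow : 0 < vlow) (hbar : vlow ≤ vbar) (hn : 1 ≤ n) :
    ∑ i ∈ Finset.Icc 1 n, geomProb vlow vbar n i = 1 := by
  have hprob : ∀ i, geomProb vlow vbar n i =
      (geomRatio vlow vbar n - 1) * optRatio vlow vbar n +
        if i = 1 then optRatio vlow vbar n else 0 := fun i => by
    unfold geomProb; split_ifs <;> ring
  simp only [hprob, Finset.sum_add_distrib, Finset.sum_const, Nat.card_Icc, Nat.add_sub_cancel,
    nsmul_eq_mul, Finset.sum_ite_eq', Finset.mem_Icc, le_rfl, hn, and_self, if_true]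
  have hd : (n : ℝ) * geomRatio vlow vbar n - (n - 1) ≠ 0 :=
    (one_pos.trans_le (one_le_nat_mul_geomRatio_sub hlow hbar hn)).ne'
  unfold optRatio
  field_simp
  ring

lemma sum_geomPrice_mul_geomProb (hlow : 0 < vlow) (hbar : vlow ≤ vbar) {k : ℕ} (hk : 1 ≤ k) :
    ∑ i ∈ Finset.Icc 1 k, geomPrice vlow vbar n i * geomProb vlow vbar n i =
      optRatio vlow vbar n * geomPrice vlow vbar n (k + 1) := by
  induction k, hk using Nat.le_induction with
  | base => simp [geomProb, geomPrice_succ hlow hbar]; ring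
  | succ m hm ih =>
    rw [Finset.sum_Icc_succ_top (by omega), ih, geomPrice_succ hlow hbar (m + 1), geomProb,
      if_neg (by omega)]
    ring

theorem suppCR_geomPrice_geomProb (hlow : 0 < vlow) (hbar : vlow ≤ vbar) (hn : 1 ≤ n) :
    suppCR vlow vbar n (geomPrice vlow vbar n) (geomProb vlow vbar n) = optRatio vlow vbar n := by
  have hmono := monotone_geomPrice (n := n) hlow hbar
  have hv : ∀ i, 0 ≤ geomPrice vlow vbar n i := fun i => (geomPrice_pos hlow hbar i).le
  have hx := geomProb_nonneg hlow hbar hn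
  have htop := geomPrice_top (vlow := vlow) (vbar := vbar) hn
  refine le_antisymm ?_ (le_suppCR hlow hbar fun F hF =>
    mul_hindsightOpt_le_mechRev hlow (optRatio_pos hlow hbar hn) hn hmono (geomPrice_one hn) htop
      (fun i _ => hx i)
      (fun k hk => (sum_geomPrice_mul_geomProb hlow hbar (Finset.mem_Icc.mp hk).1).ge) hF)
  have h := suppCR_mul_le_mechRevAt (n := n) hlow hbar (fun i _ => hv i) (fun i _ => hx i)
    ⟨hbar, le_rfl⟩
  rw [mechRevAt_of_forall_le fun i hi => (hmono (by simp at hi; omega)).trans_eq htop,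
    sum_geomPrice_mul_geomProb hlow hbar hn, htop] at h
  exact le_of_mul_le_mul_right h (hlow.trans_le hbar)

end GeometricMechanism

/-- The optimal `n`-level competitive ratio over the support ambiguity set is
`𝓡ₙ = (n(v̄/v_low)^{1/n} - (n-1))⁻¹`, attained by geometric prices
`vᵢ = v_low^{(n+1-i)/n} v̄^{(i-1)/n}` with probabilities `x₁ = (v̄/v_low)^{1/n}𝓡ₙ`,
`xᵢ = ((v̄/v_low)^{1/n} - 1)𝓡ₙ` for `i ≥ 2`. -/
theorem stmt1 (vlow vbar : ℝ) (hlow : 0 < vlow) (hbar : vlow ≤ vbar)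
    (n : ℕ) (hn : 1 ≤ n)
    (Rn : ℝ) (hRn : Rn = ((n : ℝ) * (vbar / vlow) ^ ((1 : ℝ) / n) - ((n : ℝ) - 1))⁻¹)
    (vG xG : ℕ → ℝ)
    (hvG : ∀ i, vG i = vlow ^ (((n : ℝ) + 1 - (i : ℝ)) / n) * vbar ^ (((i : ℝ) - 1) / n))
    (hxG : ∀ i, xG i = if i = 1 then (vbar / vlow) ^ ((1 : ℝ) / n) * Rn
        else ((vbar / vlow) ^ ((1 : ℝ) / n) - 1) * Rn) :
    (∀ v x : ℕ → ℝ, 0 ≤ v 1 → (∀ i, 1 ≤ i → i < n → v i ≤ v (i + 1)) → v n ≤ vbar →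
        (∀ i ∈ Finset.Icc 1 n, 0 ≤ x i) → ∑ i ∈ Finset.Icc 1 n, x i = 1 →
        suppCR vlow vbar n v x ≤ Rn) ∧
    (∀ i ∈ Finset.Icc 1 n, 0 ≤ xG i) ∧
    (∑ i ∈ Finset.Icc 1 n, xG i = 1) ∧
    suppCR vlow vbar n vG xG = Rn := by
  obtain rfl : Rn = optRatio vlow vbar n := hRn
  obtain rfl : vG = geomPrice vlow vbar n := funext hvG
  obtain rfl : xG = geomProb vlow vbar n := funext hxG
  exact ⟨fun v x hv1 hv hvn hx hx1 => suppCR_le_optRatio hlow hbar hn hv1 hv hvn hx hx1,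
    fun i _ => geomProb_nonneg hlow hbar hn i, sum_geomProb hlow hbar hn,
    suppCR_geomPrice_geomProb hlow hbar hn⟩
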